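/- arXiv:1202.2183 — 4 statements merged into one kernel-verified Lean document; each statement's English description precedes it below -/
import Mathlib

section
/- Let ω be a majorant, M > 0, and let f be a harmonic mapping in the unit disk D such that Λ_f(z) ≤ M ω(1/d(z)) for all z ∈ D. Then for every z ∈ D and every r ∈ (0, 1−|z|], (1/|D(z,r)|) ∫_{D(z,r)} |f(ζ) − f(z)| dA(ζ) ≤ 2 M r ω(1/r). -/
open Complex MeasureTheory Metric Set Real
open scoped ENNReal

/-- The Wirtinger derivative `f_z = (f_x - i f_y)/2` of `f` at `z`
(real Fréchet derivative applied to the directions `1` and `i`). -/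
noncomputable def wirtingerZ (f : ℂ → ℂ) (z : ℂ) : ℂ :=
  (fderiv ℝ f z 1 - Complex.I * fderiv ℝ f z Complex.I) / 2

/-- The Wirtinger derivative `f_z̄ = (f_x + i f_y)/2` of `f` at `z`. -/
noncomputable def wirtingerZbar (f : ℂ → ℂ) (z : ℂ) : ℂ :=
  (fderiv ℝ f z 1 + Complex.I * fderiv ℝ f z Complex.I) / 2

/-- `Λ_f(z) = |f_z(z)| + |f_z̄(z)|`. -/
noncomputable def Lam (f : ℂ → ℂ) (z : ℂ) : ℝ :=
  ‖wirtingerZ f z‖ + ‖wirtingerZbar f z‖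

/-- A complex-valued function is harmonic on a set: it is `C²` there and its
Laplacian `f_xx + f_yy` vanishes (equivalently, its real and imaginary parts are
real harmonic). -/
def IsHarmonicOn (f : ℂ → ℂ) (s : Set ℂ) : Prop :=
  ContDiffOn ℝ 2 f s ∧ ∀ z ∈ s,
    fderiv ℝ (fun w => fderiv ℝ f w 1) z 1
      + fderiv ℝ (fun w => fderiv ℝ f w Complex.I) z Complex.I = 0

/-- A majorant: a continuous increasing function `ω : [0,∞) → [0,∞)` with
`ω 0 = 0` such that `ω t / t` is non-increasing for `t > 0`. -/
def IsMajorant (ω : ℝ → ℝ) : Prop :=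
  ContinuousOn ω (Ici 0) ∧ MonotoneOn ω (Ici 0) ∧ ω 0 = 0 ∧
    ∀ s t : ℝ, 0 < s → s ≤ t → ω t / t ≤ ω s / s

/-! Along the segment from `z` to `ζ`, `|ζ - z| = s`, the point `z + t (ζ - z)` lies at distance
at least `r - t s` from the unit circle, and the majorant property turns the hypothesis into
`Λ_f ≤ M r ω(1/r) / (r - t s)` there. Integrating over `t ∈ [0, 1]` gives the logarithmic bound
`|f(ζ) - f(z)| ≤ M r ω(1/r) log (r / (r - s))`, and in polar coordinates
`∫_{D(z,r)} log (r / (r - |ζ - z|)) dA(ζ) = 2π ∫₀^r ρ log (r / (r - ρ)) dρ = (3/2) π r²`. -/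

namespace IsMajorant

variable {ω : ℝ → ℝ}

lemma nonneg (hω : IsMajorant ω) {x : ℝ} (hx : 0 ≤ x) : 0 ≤ ω x :=
  hω.2.2.1 ▸ hω.2.1 self_mem_Ici hx hx

lemma le_div_mul (hω : IsMajorant ω) {a b : ℝ} (ha : 0 < a) (hab : a ≤ b) :
    ω b ≤ b / a * ω a := by
  have := hω.2.2.2 a b ha hab
  rw [div_le_iff₀ (ha.trans_le hab)] at this
  exact this.trans_eq (by ring)

lemma apply_one_div_le (hω : IsMajorant ω) {ρ r d : ℝ} (hρ : 0 < ρ) (hρr : ρ ≤ r) (hρd : ρ ≤ d) :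
    ω (1 / d) ≤ r / ρ * ω (1 / r) := by
  have hr : 0 < r := hρ.trans_le hρr
  calc ω (1 / d) ≤ ω (1 / ρ) :=
        hω.2.1 (one_div_nonneg.2 (hρ.trans_le hρd).le) (one_div_nonneg.2 hρ.le)
          (one_div_le_one_div_of_le hρ hρd)
    _ ≤ (1 / ρ) / (1 / r) * ω (1 / r) :=
        hω.le_div_mul (one_div_pos.2 hr) (one_div_le_one_div_of_le hρ hρr)
    _ = r / ρ * ω (1 / r) := by field_simp

end IsMajorant

lemma ContinuousLinearMap.apply_eq_mul_add_mul_conj (L : ℂ →L[ℝ] ℂ) (v : ℂ) :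
    L v = (L 1 - I * L I) / 2 * v + (L 1 + I * L I) / 2 * (starRingEnd ℂ) v := by
  have hL : L v = v.re • L 1 + v.im • L I := by
    rw [← map_smul, ← map_smul, ← map_add]
    simp [real_smul]
  rw [hL, real_smul, real_smul]
  conv_rhs => rw [← re_add_im v, map_add, map_mul, conj_ofReal, conj_ofReal, conj_I]
  linear_combination (v.im * L I) * I_sq

lemma norm_fderiv_le_Lam (f : ℂ → ℂ) (w : ℂ) : ‖fderiv ℝ f w‖ ≤ Lam f w := by
  refine (fderiv ℝ f w).opNorm_le_bound (by unfold Lam; positivity) fun v => ?_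
  rw [(fderiv ℝ f w).apply_eq_mul_add_mul_conj v, Lam, add_mul]
  refine (norm_add_le _ _).trans_eq ?_
  rw [norm_mul, norm_mul, RCLike.norm_conj, wirtingerZ, wirtingerZbar]

lemma Lam_le_div_of_mem_ball {ω : ℝ → ℝ} (hω : IsMajorant ω) {M : ℝ} (hM : 0 ≤ M) {f : ℂ → ℂ}
    (hΛ : ∀ z ∈ ball (0 : ℂ) 1, Lam f z ≤ M * ω (1 / (1 - ‖z‖))) {z w : ℂ} {r : ℝ}
    (hrz : r ≤ 1 - ‖z‖) (hw : w ∈ ball z r) :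
    Lam f w ≤ M * r * ω (1 / r) / (r - ‖w - z‖) := by
  have hρ : 0 < r - ‖w - z‖ := sub_pos.2 (mem_ball_iff_norm.1 hw)
  have hd : r - ‖w - z‖ ≤ 1 - ‖w‖ := by linarith [norm_le_norm_add_norm_sub' w z]
  calc Lam f w ≤ M * ω (1 / (1 - ‖w‖)) := hΛ w (mem_ball_zero_iff.2 (by linarith))
    _ ≤ M * (r / (r - ‖w - z‖) * ω (1 / r)) :=
        mul_le_mul_of_nonneg_left (hω.apply_one_div_le hρ (by linarith [norm_nonneg (w - z)]) hd) hM
    _ = M * r * ω (1 / r) / (r - ‖w - z‖) := by ring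

lemma hasDerivAt_log_sub_log_sub_mul {r s t : ℝ} (h : r - t * s ≠ 0) :
    HasDerivAt (fun t => Real.log r - Real.log (r - t * s)) (s / (r - t * s)) t := by
  have := ((((hasDerivAt_id t).mul_const s).const_sub r).log h).const_sub (Real.log r)
  simpa [div_eq_mul_inv, mul_comm] using this

lemma norm_sub_le_mul_log_of_norm_fderiv_le {E F : Type*} [NormedAddCommGroup E]
    [NormedSpace ℝ E] [NormedAddCommGroup F] [NormedSpace ℝ F] {f : E → F} {z ζ : E} {r C : ℝ}
    (hf : DifferentiableOn ℝ f (ball z r))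
    (hbound : ∀ w ∈ ball z r, ‖fderiv ℝ f w‖ ≤ C / (r - ‖w - z‖)) (hζ : ζ ∈ ball z r) :
    ‖f ζ - f z‖ ≤ C * (Real.log r - Real.log (r - ‖ζ - z‖)) := by
  set s := ‖ζ - z‖
  have hsr : s < r := mem_ball_iff_norm.1 hζ
  set γ : ℝ → E := fun t => z + t • (ζ - z)
  have hγ_dist : ∀ t ∈ Icc (0 : ℝ) 1, ‖γ t - z‖ = t * s := fun t ht => by
    simp only [γ, add_sub_cancel_left, norm_smul, Real.norm_eq_abs, abs_of_nonneg ht.1, s]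
  have hts : ∀ t ∈ Icc (0 : ℝ) 1, t * s < r := fun t ht =>
    (mul_le_of_le_one_left (norm_nonneg _) ht.2).trans_lt hsr
  have hγ_mem : ∀ t ∈ Icc (0 : ℝ) 1, γ t ∈ ball z r := fun t ht => by
    rw [mem_ball_iff_norm, hγ_dist t ht]
    exact hts t ht
  have hγ_deriv : ∀ t, HasDerivAt γ (ζ - z) t := fun t => by
    simpa only [id, one_smul] using ((hasDerivAt_id t).smul_const (ζ - z)).const_add z
  have hfγ : ∀ t ∈ Icc (0 : ℝ) 1,
      HasDerivAt (fun t => f (γ t) - f z) (fderiv ℝ f (γ t) (ζ - z)) t := fun t ht => by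
    have hft := hf.differentiableAt (isOpen_ball.mem_nhds (hγ_mem t ht))
    exact (hft.hasFDerivAt.comp_hasDerivAt t (hγ_deriv t)).sub_const (f z)
  have hB : ∀ t ∈ Icc (0 : ℝ) 1, HasDerivAt (fun t => C * (Real.log r - Real.log (r - t * s)))
      (C * (s / (r - t * s))) t := fun t ht =>
    (hasDerivAt_log_sub_log_sub_mul (sub_pos.2 (hts t ht)).ne').const_mul C
  have hf'_le : ∀ t ∈ Ico (0 : ℝ) 1, ‖fderiv ℝ f (γ t) (ζ - z)‖ ≤ C * (s / (r - t * s)) :=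
    fun t ht => by
      have ht' := Ico_subset_Icc_self ht
      calc ‖fderiv ℝ f (γ t) (ζ - z)‖ ≤ ‖fderiv ℝ f (γ t)‖ * s := (fderiv ℝ f (γ t)).le_opNorm _
        _ ≤ C / (r - t * s) * s := by
          rw [← hγ_dist t ht']
          gcongr
          exact hbound _ (hγ_mem t ht')
        _ = C * (s / (r - t * s)) := by ring
  have key := image_norm_le_of_norm_deriv_right_le_deriv_boundary'
    (fun t ht => (hfγ t ht).continuousAt.continuousWithinAt)
    (fun t ht => (hfγ t (Ico_subset_Icc_self ht)).hasDerivWithinAt) (by simp [γ])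
    (fun t ht => (hB t ht).continuousAt.continuousWithinAt)
    (fun t ht => (hB t (Ico_subset_Icc_self ht)).hasDerivWithinAt) hf'_le
    (right_mem_Icc.2 zero_le_one)
  simpa [γ] using key

lemma indicator_ball_comp_norm_sub {F : Type*} [Zero F] (g : ℝ → F) (z : ℂ) (r : ℝ) :
    (ball z r).indicator (fun ζ => g ‖ζ - z‖) = fun ζ => (Iio r).indicator g ‖ζ - z‖ := by
  ext ζ
  simp only [indicator, mem_ball_iff_norm, mem_Iio]

section Polar

variable {F : Type*} [NormedAddCommGroup F] [NormedSpace ℝ F]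

lemma smul_indicator_Iio (g : ℝ → F) (r : ℝ) :
    (fun y : ℝ => y • (Iio r).indicator g y) = (Iio r).indicator fun y => y • g y :=
  funext fun y => (indicator_smul_apply (Iio r) (fun y => y) g y).symm

lemma integral_ball_comp_norm_sub (g : ℝ → F) (z : ℂ) (r : ℝ) :
    ∫ ζ in ball z r, g ‖ζ - z‖ = (2 * π) • ∫ ρ in Ioo 0 r, ρ • g ρ := by
  rw [← integral_indicator measurableSet_ball, indicator_ball_comp_norm_sub,
    integral_sub_right_eq_self (fun x : ℂ => (Iio r).indicator g ‖x‖) z,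
    integral_fun_norm_addHaar]
  simp only [Complex.finrank_real_complex, Nat.reduceSub, pow_one, smul_indicator_Iio]
  rw [setIntegral_indicator measurableSet_Iio, Ioi_inter_Iio]
  simp [Measure.real, ← smul_assoc]

lemma integrableOn_ball_comp_norm_sub {g : ℝ → F} {r : ℝ}
    (hg : IntegrableOn (fun ρ => ρ • g ρ) (Ioo 0 r)) (z : ℂ) :
    IntegrableOn (fun ζ => g ‖ζ - z‖) (ball z r) := by
  rw [← integrable_indicator_iff measurableSet_ball, indicator_ball_comp_norm_sub]
  refine Integrable.comp_sub_right (f := fun x : ℂ => (Iio r).indicator g ‖x‖) ?_ z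
  simp only [integrable_fun_norm_addHaar, Complex.finrank_real_complex, Nat.reduceSub, pow_one,
    smul_indicator_Iio]
  rwa [IntegrableOn, integrable_indicator_iff measurableSet_Iio, IntegrableOn,
    Measure.restrict_restrict measurableSet_Iio, Iio_inter_Ioi]

end Polar

lemma intervalIntegrable_mul_log_sub_log_sub (r : ℝ) :
    IntervalIntegrable (fun ρ => ρ * (Real.log r - Real.log (r - ρ))) volume 0 r := by
  have hlog : IntervalIntegrable (fun ρ => Real.log (r - ρ)) volume 0 r := by
    simpa using (intervalIntegral.intervalIntegrable_log'.comp_sub_left (a := 0) (b := r) r).symm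
  exact (intervalIntegrable_const.sub hlog).continuousOn_mul continuousOn_id

lemma integral_sub_mul_log_sub_log {r : ℝ} (hr : 0 ≤ r) :
    ∫ v in (0)..r, (r - v) * (Real.log r - Real.log v) = 3 / 4 * r ^ 2 := by
  set H : ℝ → ℝ := fun v => r * v * Real.log r - v ^ 2 / 2 * Real.log r - r * (v * Real.log v)
    + r * v + v * (v * Real.log v) / 2 - v ^ 2 / 4
  -- `v ↦ v log v` extends continuously by `0` at `v = 0`, which is what makes `H` continuous there.
  have hH : Continuous H := by
    have := Real.continuous_mul_log
    fun_prop
  have hH' : ∀ v ∈ Ioo 0 r,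
      HasDerivWithinAt H ((r - v) * (Real.log r - Real.log v)) (Ioi v) v := by
    intro v hv
    have hml := Real.hasDerivAt_mul_log hv.1.ne'
    have := (((((hasDerivAt_id v).const_mul r).mul_const (Real.log r)).sub
      (((hasDerivAt_pow 2 v).div_const 2).mul_const (Real.log r))).sub (hml.const_mul r)).add
      ((hasDerivAt_id v).const_mul r) |>.add (((hasDerivAt_id v).mul hml).div_const 2)
      |>.sub ((hasDerivAt_pow 2 v).div_const 4)
    refine (this.congr_deriv ?_).hasDerivWithinAt
    simp only [id]
    ring
  have hint : IntervalIntegrable (fun v => (r - v) * (Real.log r - Real.log v)) volume 0 r :=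
    (intervalIntegrable_const.sub intervalIntegral.intervalIntegrable_log').continuousOn_mul
      (by fun_prop)
  rw [intervalIntegral.integral_eq_sub_of_hasDeriv_right_of_le hr hH.continuousOn hH' hint]
  simp only [H, mul_zero, zero_mul, ne_eq, OfNat.ofNat_ne_zero, not_false_eq_true, zero_pow,
    zero_div, sub_self, Real.log_zero, add_zero, sub_zero]
  ring

lemma integral_mul_log_sub_log_sub {r : ℝ} (hr : 0 ≤ r) :
    ∫ ρ in (0)..r, ρ * (Real.log r - Real.log (r - ρ)) = 3 / 4 * r ^ 2 :=
  calc ∫ ρ in (0)..r, ρ * (Real.log r - Real.log (r - ρ))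
      = ∫ ρ in (0)..r, (r - (r - ρ)) * (Real.log r - Real.log (r - ρ)) := by
        simp only [sub_sub_cancel]
    _ = ∫ v in (0)..r, (r - v) * (Real.log r - Real.log v) := by
        rw [intervalIntegral.integral_comp_sub_left (fun v => (r - v) * (Real.log r - Real.log v))]
        simp
    _ = 3 / 4 * r ^ 2 := integral_sub_mul_log_sub_log hr

lemma integrableOn_ball_log_sub_log_sub {r : ℝ} (hr : 0 ≤ r) (z : ℂ) :
    IntegrableOn (fun ζ => Real.log r - Real.log (r - ‖ζ - z‖)) (ball z r) :=
  integrableOn_ball_comp_norm_sub (g := fun ρ => Real.log r - Real.log (r - ρ))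
    ((intervalIntegrable_iff_integrableOn_Ioo_of_le hr).1
      (intervalIntegrable_mul_log_sub_log_sub r)) z

lemma integral_ball_log_sub_log_sub {r : ℝ} (hr : 0 ≤ r) (z : ℂ) :
    ∫ ζ in ball z r, (Real.log r - Real.log (r - ‖ζ - z‖)) = 3 / 2 * π * r ^ 2 := by
  rw [integral_ball_comp_norm_sub (fun ρ => Real.log r - Real.log (r - ρ)),
    ← integral_Ioc_eq_integral_Ioo, ← intervalIntegral.integral_of_le hr]
  simp only [smul_eq_mul, integral_mul_log_sub_log_sub hr]
  ring

/-- if `ω` is a majorant, `M > 0`, and `f` is harmonic in the unit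
disk with `Λ_f(z) ≤ M ω(1/d(z))` on `𝔻`, then for every `z ∈ 𝔻` and `r ∈ (0, 1-|z|]`,
`(1/(πr²)) ∫_{D(z,r)} |f(ζ) - f(z)| dA(ζ) ≤ 2 M r ω(1/r)`. -/
theorem stmt1 (ω : ℝ → ℝ) (hω : IsMajorant ω) (M : ℝ) (hM : 0 < M) (f : ℂ → ℂ)
    (hf : IsHarmonicOn f (ball (0 : ℂ) 1))
    (hΛ : ∀ z ∈ ball (0 : ℂ) 1, Lam f z ≤ M * ω (1 / (1 - ‖z‖))) :
    ∀ z ∈ ball (0 : ℂ) 1, ∀ r : ℝ, 0 < r → r ≤ 1 - ‖z‖ →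
      (π * r ^ 2)⁻¹ * (∫ ζ in ball z r, ‖f ζ - f z‖) ≤ 2 * M * (r * ω (1 / r)) := by
  intro z _ r hr hrz
  set C := M * r * ω (1 / r)
  have hC : 0 ≤ C := mul_nonneg (by positivity) (hω.nonneg (by positivity))
  have hsub : ball z r ⊆ ball (0 : ℂ) 1 := ball_subset_ball' (by rw [dist_zero_right]; linarith)
  have hpt : ∀ ζ ∈ ball z r, ‖f ζ - f z‖ ≤ C * (Real.log r - Real.log (r - ‖ζ - z‖)) :=
    fun ζ => norm_sub_le_mul_log_of_norm_fderiv_le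
      ((hf.1.differentiableOn two_ne_zero).mono hsub)
      fun w hw => (norm_fderiv_le_Lam f w).trans (Lam_le_div_of_mem_ball hω hM.le hΛ hrz hw)
  have hI : ∫ ζ in ball z r, ‖f ζ - f z‖ ≤ C * (3 / 2 * π * r ^ 2) := by
    rw [← integral_ball_log_sub_log_sub hr.le z, ← integral_const_mul]
    refine integral_mono_of_nonneg (.of_forall fun _ => norm_nonneg _)
      ((integrableOn_ball_log_sub_log_sub hr.le z).const_mul C) ?_
    exact (ae_restrict_mem measurableSet_ball).mono hpt
  calc (π * r ^ 2)⁻¹ * (∫ ζ in ball z r, ‖f ζ - f z‖)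
      ≤ (π * r ^ 2)⁻¹ * (C * (3 / 2 * π * r ^ 2)) := by gcongr
    _ = 3 / 2 * C := by field_simp
    _ ≤ 2 * M * (r * ω (1 / r)) := by linarith
end

section
/- Let ω be a majorant, M > 0, and let f be a harmonic mapping in the unit disk D such that for every z ∈ D and every r ∈ (0, 1−|z|], (1/|D(z,r)|) ∫_{D(z,r)} |f(ζ) − f(z)| dA(ζ) ≤ M r ω(1/r). Then Λ_f(z) ≤ 6 M ω(1/d(z)) for every z ∈ D. -/
open Complex MeasureTheory Metric Set Real
open scoped ENNReal

/-! The `r`-derivative of `∫₀^{2π} (f(z + r e^{iθ}) - f(z)) e^{-iθ} dθ` is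
`∫₀^{2π} (f_z(z + r e^{iθ}) + e^{-2iθ} f_z̄(z + r e^{iθ})) dθ`. For harmonic `f` both `f_z` and
`conj f_z̄` are holomorphic, so the mean value property (applied to `f_z` and to
`(ζ - z)² conj f_z̄(ζ)`) makes this derivative the constant `2π f_z(z)`. Hence
`2π r |f_z(z)| ≤ ∫₀^{2π} |f(z + r e^{iθ}) - f(z)| dθ`, and the same bound for `f_z̄` follows by
applying this to `conj f`, whose `z`-derivative is `conj f_z̄`. Integrating in polar coordinates
over `D(z, t)` with `t = d(z)/2` gives
`(π t³ / 3) Λ_f(z) ≤ ∫_{D(z,t)} |f - f(z)| dA ≤ π t³ M ω(1/t)`, and `ω(2s) ≤ 2 ω(s)`. -/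

open ComplexConjugate

lemma ContinuousLinearMap.apply_eq_re_mul_add_im_mul (L : ℂ →L[ℝ] ℂ) (v : ℂ) :
    L v = v.re * L 1 + v.im * L I := by
  have hv : v = v.re • (1 : ℂ) + v.im • I := by simp [Complex.real_smul, re_add_im]
  conv_lhs => rw [hv, map_add, L.map_smul, L.map_smul]
  simp only [Complex.real_smul]

lemma fderiv_apply_eq_wirtinger (f : ℂ → ℂ) (z v : ℂ) :
    fderiv ℝ f z v = v * wirtingerZ f z + conj v * wirtingerZbar f z := by
  rw [(fderiv ℝ f z).apply_eq_re_mul_add_im_mul, wirtingerZ, wirtingerZbar]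
  conv_rhs => rw [← re_add_im v]
  simp only [map_add, map_mul, conj_ofReal, conj_I]
  linear_combination (v.im : ℂ) * fderiv ℝ f z I * I_sq

lemma fderiv_conj_comp (f : ℂ → ℂ) (z : ℂ) :
    fderiv ℝ (fun w => conj (f w)) z = conjCLE.toContinuousLinearMap.comp (fderiv ℝ f z) :=
  conjCLE.comp_fderiv (f := f)

lemma wirtingerZbar_eq_conj_wirtingerZ_conj (f : ℂ → ℂ) (z : ℂ) :
    wirtingerZbar f z = conj (wirtingerZ (fun w => conj (f w)) z) := by
  simp only [wirtingerZbar, wirtingerZ, fderiv_conj_comp]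
  simp [map_sub, map_div₀, conj_I, map_ofNat]

lemma IsHarmonicOn.mono {f : ℂ → ℂ} {s t : Set ℂ} (hf : IsHarmonicOn f t) (hst : s ⊆ t) :
    IsHarmonicOn f s :=
  ⟨hf.1.mono hst, fun z hz => hf.2 z (hst hz)⟩

lemma IsHarmonicOn.conj {f : ℂ → ℂ} {s : Set ℂ} (hf : IsHarmonicOn f s) :
    IsHarmonicOn (fun w => conj (f w)) s := by
  refine ⟨conjCLE.contDiff.comp_contDiffOn hf.1, fun z hz => ?_⟩
  simp only [fderiv_conj_comp, ContinuousLinearMap.comp_apply,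
    ContinuousLinearEquiv.coe_coe, conjCLE_apply,
    fderiv_conj_comp (fun w => fderiv ℝ f w 1), fderiv_conj_comp (fun w => fderiv ℝ f w I)]
  simpa using congrArg conj (hf.2 z hz)

lemma IsHarmonicOn.differentiableAt_wirtingerZ {f : ℂ → ℂ} {U : Set ℂ} (hf : IsHarmonicOn f U)
    (hU : IsOpen U) {z : ℂ} (hz : z ∈ U) : DifferentiableAt ℂ (wirtingerZ f) z := by
  have hC2 : ContDiffAt ℝ 2 f z := hf.1.contDiffAt (hU.mem_nhds hz)
  have hD : DifferentiableAt ℝ (fderiv ℝ f) z :=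
    (hC2.fderiv_right (m := 1) (by norm_num)).differentiableAt one_ne_zero
  set S := fderiv ℝ (fderiv ℝ f) z
  have hsymm : S I 1 = S 1 I := hC2.isSymmSndFDerivAt (by simp) I 1
  have hpartial (v : ℂ) : HasFDerivAt (fun w => fderiv ℝ f w v)
      ((ContinuousLinearMap.apply ℝ ℂ v).comp S) z :=
    (ContinuousLinearMap.apply ℝ ℂ v).hasFDerivAt.comp z hD.hasFDerivAt
  have hlap : S 1 1 + S I I = 0 := by
    simpa [(hpartial 1).fderiv, (hpartial I).fderiv] using hf.2 z hz
  have hW := (((hpartial 1).sub ((hpartial I).const_mul I)).const_mul (2 : ℂ)⁻¹)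
    |>.congr_of_eventuallyEq (f₁ := wirtingerZ f)
      (.of_forall fun w => by simp [wirtingerZ, div_eq_inv_mul])
  rw [differentiableAt_complex_iff_differentiableAt_real, hW.fderiv]
  refine ⟨hW.differentiableAt, ?_⟩
  simp only [FunLike.coe_smul, FunLike.coe_sub, Pi.smul_apply,
    Pi.sub_apply, ContinuousLinearMap.comp_apply, ContinuousLinearMap.apply_apply, smul_eq_mul]
  linear_combination (2 : ℂ)⁻¹ * hsymm - (2 : ℂ)⁻¹ * I * hlap + (2 : ℂ)⁻¹ * S 1 I * I_sq

lemma circleMap_mem_ball_of_abs_lt (z : ℂ) {r R : ℝ} (h : |r| < R) (θ : ℝ) :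
    circleMap z r θ ∈ ball z R := by
  simpa [dist_eq_norm, circleMap_sub_center] using h

lemma circleMap_mem_closedBall_of_abs_le (z : ℂ) {r R : ℝ} (h : |r| ≤ R) (θ : ℝ) :
    circleMap z r θ ∈ closedBall z R := by
  simpa [dist_eq_norm, circleMap_sub_center] using h

lemma ContinuousOn.continuous_comp_circleMap {α : Type*} [TopologicalSpace α] {g : ℂ → α}
    {z : ℂ} {r R : ℝ} (hg : ContinuousOn g (ball z R)) (h : |r| < R) :
    Continuous fun θ => g (circleMap z r θ) :=
  hg.comp_continuous (continuous_circleMap z r) (circleMap_mem_ball_of_abs_lt z h)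

lemma hasDerivAt_circleMap_radius (z : ℂ) (θ x : ℝ) :
    HasDerivAt (fun r : ℝ => circleMap z r θ) (exp (θ * I)) x := by
  simpa [circleMap] using ((ofRealCLM.hasDerivAt (x := x)).mul_const (exp (θ * I))).const_add z

lemma hasDerivAt_integral_circleMap_radius {f : ℂ → ℂ} {z : ℂ} {R x : ℝ}
    (hf : ContDiffOn ℝ 1 f (ball z R)) (hx : |x| < R) :
    HasDerivAt (fun r : ℝ => ∫ θ in 0..2 * π, (f (circleMap z r θ) - f z) * exp (-(θ * I)))
      (∫ θ in 0..2 * π, fderiv ℝ f (circleMap z x θ) (exp (θ * I)) * exp (-(θ * I))) x := by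
  obtain ⟨ρ, hxρ, hρR⟩ := exists_between hx
  have hnear : ∀ r ∈ ball x (ρ - |x|), |r| ≤ ρ := fun r hr => by
    have := abs_sub_abs_le_abs_sub r x
    rw [mem_ball, Real.dist_eq] at hr
    linarith
  have hDf : ContinuousOn (fderiv ℝ f) (ball z R) :=
    hf.continuousOn_fderiv_of_isOpen isOpen_ball le_rfl
  obtain ⟨C, hC⟩ := (isCompact_closedBall z ρ).exists_bound_of_continuousOn
    (hDf.mono (closedBall_subset_ball hρR))
  have hexp : Continuous fun θ : ℝ => exp (-(θ * I)) := by fun_prop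
  refine (intervalIntegral.hasDerivAt_integral_of_dominated_loc_of_deriv_le (μ := volume)
    (F := fun r θ => (f (circleMap z r θ) - f z) * exp (-(θ * I)))
    (F' := fun r θ => fderiv ℝ f (circleMap z r θ) (exp (θ * I)) * exp (-(θ * I)))
    (bound := fun _ => C) (ball_mem_nhds x (sub_pos.2 hxρ)) ?_ ?_ ?_ ?_
    intervalIntegrable_const ?_).2
  · filter_upwards [ball_mem_nhds x (sub_pos.2 hxρ)] with r hr
    exact ((hf.continuousOn.continuous_comp_circleMap ((hnear r hr).trans_lt hρR)).sub
      continuous_const |>.mul hexp).aestronglyMeasurable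
  · exact ((hf.continuousOn.continuous_comp_circleMap hx).sub continuous_const
      |>.mul hexp).intervalIntegrable _ _
  · exact ((hDf.continuous_comp_circleMap hx).clm_apply (by fun_prop)
      |>.mul hexp).aestronglyMeasurable
  · refine .of_forall fun θ _ r hr => ?_
    calc ‖fderiv ℝ f (circleMap z r θ) (exp (θ * I)) * exp (-(θ * I))‖
        ≤ ‖fderiv ℝ f (circleMap z r θ)‖ * ‖exp (θ * I)‖ * ‖exp (-(θ * I))‖ := by
          rw [norm_mul]; gcongr; exact ContinuousLinearMap.le_opNorm _ _
      _ ≤ C := by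
          simpa [norm_exp] using
            hC _ (circleMap_mem_closedBall_of_abs_le z (hnear r hr) θ)
  · refine .of_forall fun θ _ r hr => ?_
    have hfr : HasFDerivAt f (fderiv ℝ f (circleMap z r θ)) (circleMap z r θ) :=
      ((hf.differentiableOn one_ne_zero).differentiableAt (isOpen_ball.mem_nhds
        (circleMap_mem_ball_of_abs_lt z ((hnear r hr).trans_lt hρR) θ))).hasFDerivAt
    exact ((hfr.comp_hasDerivAt r (hasDerivAt_circleMap_radius z θ r)).sub_const (f z)).mul_const _

lemma DiffContOnCl.integral_exp_two_mul_mul_circleMap_eq_zero {G : ℂ → ℂ} {z : ℂ} {x : ℝ}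
    (hG : DiffContOnCl ℂ G (ball z |x|)) (hx : x ≠ 0) :
    ∫ θ in 0..2 * π, exp (2 * θ * I) * G (circleMap z x θ) = 0 := by
  have hH : DiffContOnCl ℂ (fun ζ => (ζ - z) ^ 2 * G ζ) (ball z |x|) :=
    ((differentiable_id.sub_const z).pow 2).diffContOnCl.smul hG
  have hpt (θ : ℝ) : (circleMap z x θ - z) ^ 2 * G (circleMap z x θ)
      = (x : ℂ) ^ 2 * (exp (2 * θ * I) * G (circleMap z x θ)) := by
    rw [circleMap_sub_center, circleMap_zero, show (2 : ℂ) * θ * I = θ * I + θ * I by ring,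
      Complex.exp_add]
    ring
  -- the mean value property of `(ζ - z) ^ 2 * G ζ`, which vanishes at `z`
  have hmvp := hH.circleAverage
  simp only [circleAverage_def, hpt, intervalIntegral.integral_const_mul, sub_self] at hmvp
  simpa [hx, Real.pi_ne_zero] using hmvp

lemma IsHarmonicOn.diffContOnCl_wirtingerZ {f : ℂ → ℂ} {z : ℂ} {R x : ℝ}
    (hf : IsHarmonicOn f (ball z R)) (hx : |x| < R) :
    DiffContOnCl ℂ (wirtingerZ f) (ball z |x|) :=
  DifferentiableOn.diffContOnCl_ball
    (fun _ hw => (hf.differentiableAt_wirtingerZ isOpen_ball hw).differentiableWithinAt)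
    (closedBall_subset_ball hx)

lemma fderiv_apply_exp_mul_exp_neg (f : ℂ → ℂ) (w : ℂ) (θ : ℝ) :
    fderiv ℝ f w (exp (θ * I)) * exp (-(θ * I))
      = wirtingerZ f w + conj (exp (2 * θ * I) * wirtingerZ (fun w => conj (f w)) w) := by
  have h1 : exp (θ * I) * exp (-(θ * I)) = 1 := by rw [← Complex.exp_add]; simp
  have h2 : conj (exp (θ * I)) = exp (-(θ * I)) := by rw [← exp_conj]; simp
  have h3 : conj (exp (2 * θ * I)) = exp (-(θ * I)) * exp (-(θ * I)) := by
    rw [← exp_conj, ← Complex.exp_add]; congr 1; simp [map_ofNat]; ring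
  rw [fderiv_apply_eq_wirtinger, wirtingerZbar_eq_conj_wirtingerZ_conj, map_mul, h2, h3]
  linear_combination wirtingerZ f w * h1

lemma IsHarmonicOn.integral_fderiv_circleMap_mul_exp_neg {f : ℂ → ℂ} {z : ℂ} {R x : ℝ}
    (hf : IsHarmonicOn f (ball z R)) (hx0 : 0 < x) (hxR : x < R) :
    ∫ θ in 0..2 * π, fderiv ℝ f (circleMap z x θ) (exp (θ * I)) * exp (-(θ * I))
      = 2 * π * wirtingerZ f z := by
  have hx : |x| < R := by rwa [abs_of_pos hx0]
  have hF := hf.diffContOnCl_wirtingerZ hx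
  have hG := hf.conj.diffContOnCl_wirtingerZ hx
  have hcont {g : ℂ → ℂ} (hg : DiffContOnCl ℂ g (ball z |x|)) :
      Continuous fun θ => g (circleMap z x θ) :=
    hg.continuousOn_ball.comp_continuous (continuous_circleMap z x)
      (circleMap_mem_closedBall_of_abs_le z le_rfl)
  have hmvp := hF.circleAverage
  rw [circleAverage_def, inv_smul_eq_iff₀ (by positivity)] at hmvp
  have hint₁ : IntervalIntegrable (fun θ => wirtingerZ f (circleMap z x θ)) volume 0 (2 * π) :=
    (hcont hF).intervalIntegrable _ _
  have hint₂ : IntervalIntegrable (fun θ : ℝ => conj (exp (2 * θ * I)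
      * wirtingerZ (fun w => conj (f w)) (circleMap z x θ))) volume 0 (2 * π) :=
    (continuous_conj.comp ((by fun_prop : Continuous fun θ : ℝ => exp (2 * θ * I)).mul
      (hcont hG))).intervalIntegrable _ _
  simp only [fderiv_apply_exp_mul_exp_neg]
  rw [intervalIntegral.integral_add hint₁ hint₂, intervalIntegral.intervalIntegral_conj,
    hG.integral_exp_two_mul_mul_circleMap_eq_zero hx0.ne', hmvp]
  simp [Complex.real_smul]

lemma IsHarmonicOn.integral_sub_circleMap_mul_exp_neg {f : ℂ → ℂ} {z : ℂ} {R s : ℝ}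
    (hf : IsHarmonicOn f (ball z R)) (hs0 : 0 ≤ s) (hsR : s < R) :
    ∫ θ in 0..2 * π, (f (circleMap z s θ) - f z) * exp (-(θ * I))
      = 2 * π * s * wirtingerZ f z := by
  have hderiv (x : ℝ) (hx : x ∈ Icc 0 s) :=
    hasDerivAt_integral_circleMap_radius (hf.1.of_le one_le_two)
      (show |x| < R by rw [abs_of_nonneg hx.1]; exact hx.2.trans_lt hsR)
  have hftc := intervalIntegral.integral_eq_sub_of_hasDerivAt_of_le hs0
    (fun x hx => (hderiv x hx).continuousAt.continuousWithinAt)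
    (fun x hx => (hf.integral_fderiv_circleMap_mul_exp_neg hx.1 (hx.2.trans hsR)) ▸
      hderiv x (Ioo_subset_Icc_self hx))
    intervalIntegrable_const
  simp only [intervalIntegral.integral_const, circleMap_zero_radius, Function.const_apply,
    sub_self, zero_mul, intervalIntegral.integral_zero, sub_zero] at hftc
  rw [← hftc, Complex.real_smul]
  ring

lemma IsHarmonicOn.mul_norm_wirtingerZ_le_circleAverage {f : ℂ → ℂ} {z : ℂ} {R s : ℝ}
    (hf : IsHarmonicOn f (ball z R)) (hs0 : 0 ≤ s) (hsR : s < R) :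
    s * ‖wirtingerZ f z‖ ≤ circleAverage (fun ζ => ‖f ζ - f z‖) z s := by
  have h := intervalIntegral.norm_integral_le_integral_norm (μ := volume)
    (f := fun θ : ℝ => (f (circleMap z s θ) - f z) * exp (-(θ * I))) Real.two_pi_pos.le
  simp only [hf.integral_sub_circleMap_mul_exp_neg hs0 hsR, norm_mul, norm_exp] at h
  rw [circleAverage_def, smul_eq_mul, le_inv_mul_iff₀ Real.two_pi_pos]
  simpa [abs_of_nonneg hs0, abs_of_pos Real.pi_pos, mul_assoc] using h

lemma IsHarmonicOn.mul_lam_le_two_mul_circleAverage {f : ℂ → ℂ} {z : ℂ} {R s : ℝ}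
    (hf : IsHarmonicOn f (ball z R)) (hs0 : 0 ≤ s) (hsR : s < R) :
    s * Lam f z ≤ 2 * circleAverage (fun ζ => ‖f ζ - f z‖) z s := by
  have hz := hf.mul_norm_wirtingerZ_le_circleAverage hs0 hsR
  have hzbar := hf.conj.mul_norm_wirtingerZ_le_circleAverage hs0 hsR
  simp only [← map_sub, Complex.norm_conj] at hzbar
  rw [Lam, wirtingerZbar_eq_conj_wirtingerZ_conj, Complex.norm_conj]
  linarith

section Polar

variable {E : Type*} [NormedAddCommGroup E] [NormedSpace ℝ E]

lemma setIntegral_ball_eq_setIntegral_polar (g : ℂ → E) (z : ℂ) (t : ℝ) :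
    ∫ ζ in ball z t, g ζ = ∫ p in Ioo 0 t ×ˢ Ioo (-π) π, p.1 • g (circleMap z p.1 p.2) := by
  have hpolar (p : ℝ × ℝ) : z + Complex.polarCoord.symm p = circleMap z p.1 p.2 := by
    simp [circleMap, exp_mul_I]
  have hS : Ioo 0 t ×ˢ Ioo (-π) π ⊆ Complex.polarCoord.target :=
    prod_mono Ioo_subset_Ioi_self subset_rfl
  rw [← integral_indicator measurableSet_ball,
    ← integral_add_left_eq_self z (f := (ball z t).indicator g),
    ← Complex.integral_comp_polarCoord_symm, ← inter_eq_self_of_subset_right hS,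
    ← setIntegral_indicator (measurableSet_Ioo.prod measurableSet_Ioo)]
  refine setIntegral_congr_fun Complex.polarCoord.open_target.measurableSet fun p hp => ?_
  obtain ⟨hp1, hp2⟩ := hp
  have hmem : circleMap z p.1 p.2 ∈ ball z t ↔ p ∈ Ioo 0 t ×ˢ Ioo (-π) π := by
    simp [dist_eq_norm, circleMap_sub_center, abs_of_pos (mem_Ioi.1 hp1), mem_Ioi.1 hp1,
      show p.2 ∈ Ioo (-π) π from hp2]
  simp only [hpolar]
  by_cases h : p ∈ Ioo 0 t ×ˢ Ioo (-π) π
  · rw [indicator_of_mem h, indicator_of_mem (hmem.2 h)]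
  · rw [indicator_of_notMem h, indicator_of_notMem (mt hmem.1 h), smul_zero]

lemma ContinuousOn.setIntegral_ball_eq_integral_circleAverage [CompleteSpace E] {g : ℂ → E}
    {z : ℂ} {t : ℝ} (hg : ContinuousOn g (closedBall z t)) (ht : 0 ≤ t) :
    ∫ ζ in ball z t, g ζ = (2 * π) • ∫ x in 0..t, x • circleAverage g z x := by
  have hint : IntegrableOn (fun p : ℝ × ℝ => p.1 • g (circleMap z p.1 p.2))
      (Icc 0 t ×ˢ Icc (-π) π) (volume.prod volume) := by
    refine ContinuousOn.integrableOn_compact (isCompact_Icc.prod isCompact_Icc) ?_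
    refine continuousOn_fst.smul (hg.comp (by fun_prop) fun p hp => ?_)
    exact circleMap_mem_closedBall_of_abs_le z (by rw [abs_of_nonneg hp.1.1]; exact hp.1.2) p.2
  rw [setIntegral_ball_eq_setIntegral_polar, Measure.volume_eq_prod,
    setIntegral_prod _ (hint.mono_set (prod_mono Ioo_subset_Icc_self Ioo_subset_Icc_self)),
    intervalIntegral.integral_of_le ht, integral_Ioc_eq_integral_Ioo, ← integral_smul]
  refine setIntegral_congr_fun measurableSet_Ioo fun x _ => ?_
  have hper := ((periodic_circleMap z x).comp g).intervalIntegral_add_eq (-π) 0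
  rw [show -π + 2 * π = π by ring, zero_add] at hper
  simp only [Function.comp_def] at hper
  rw [integral_smul, ← integral_Ioc_eq_integral_Ioo, ← intervalIntegral.integral_of_le
    (by linarith [Real.pi_pos]), hper, circleAverage_def, smul_comm (2 * π) x, smul_inv_smul₀
    Real.two_pi_pos.ne']

end Polar

lemma IsHarmonicOn.mul_lam_le_setIntegral_norm_sub {f : ℂ → ℂ} {z : ℂ} {R t : ℝ}
    (hf : IsHarmonicOn f (ball z R)) (ht0 : 0 ≤ t) (htR : t < R) :
    π * t ^ 3 / 3 * Lam f z ≤ ∫ ζ in ball z t, ‖f ζ - f z‖ := by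
  have hg : ContinuousOn (fun ζ => ‖f ζ - f z‖) (closedBall z t) :=
    (hf.1.continuousOn.sub continuousOn_const).norm.mono (closedBall_subset_ball htR)
  have hCA : ContinuousOn (circleAverage (fun ζ => ‖f ζ - f z‖) z) (Icc 0 t) :=
    (hg.mono fun ζ hζ => by simpa [dist_eq_norm] using hζ.2).circleAverage fun _ hr => hr.1
  rw [hg.setIntegral_ball_eq_integral_circleAverage ht0]
  simp only [smul_eq_mul]
  calc π * t ^ 3 / 3 * Lam f z = 2 * π * ∫ x in 0..t, x * (x * Lam f z / 2) := by
        simp only [← mul_div_assoc, ← mul_assoc, ← pow_two, intervalIntegral.integral_div,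
          intervalIntegral.integral_mul_const, integral_pow]
        ring
    _ ≤ 2 * π * ∫ x in 0..t, x * circleAverage (fun ζ => ‖f ζ - f z‖) z x := by
        gcongr
        refine intervalIntegral.integral_mono_on ht0
          (Continuous.intervalIntegrable (by fun_prop) _ _)
          ((continuousOn_id.mul hCA).intervalIntegrable_of_Icc ht0) fun x hx => ?_
        have := hf.mul_lam_le_two_mul_circleAverage hx.1 (hx.2.trans_lt htR)
        exact mul_le_mul_of_nonneg_left (by linarith) hx.1

lemma IsMajorant.le_two_mul {ω : ℝ → ℝ} (hω : IsMajorant ω) {t : ℝ} (ht : 0 < t) :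
    ω (2 * t) ≤ 2 * ω t := by
  have h := hω.2.2.2 t (2 * t) ht (by linarith)
  rw [div_le_div_iff₀ (by positivity) ht] at h
  nlinarith

/-- if `ω` is a majorant, `M > 0`, and `f` is harmonic in the unit
disk such that `(1/(πr²)) ∫_{D(z,r)} |f(ζ) - f(z)| dA(ζ) ≤ M r ω(1/r)` for every
`z ∈ 𝔻` and `r ∈ (0, 1-|z|]`, then `Λ_f(z) ≤ 6 M ω(1/d(z))` on `𝔻`. -/
theorem stmt2 (ω : ℝ → ℝ) (hω : IsMajorant ω) (M : ℝ) (hM : 0 < M) (f : ℂ → ℂ)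
    (hf : IsHarmonicOn f (ball (0 : ℂ) 1))
    (hInt : ∀ z ∈ ball (0 : ℂ) 1, ∀ r : ℝ, 0 < r → r ≤ 1 - ‖z‖ →
      (π * r ^ 2)⁻¹ * (∫ ζ in ball z r, ‖f ζ - f z‖) ≤ M * (r * ω (1 / r))) :
    ∀ z ∈ ball (0 : ℂ) 1, Lam f z ≤ 6 * M * ω (1 / (1 - ‖z‖)) := by
  intro z hz
  set r := 1 - ‖z‖
  have hr : 0 < r := by simpa [r] using hz
  have hfz : IsHarmonicOn f (ball z r) := hf.mono (ball_subset_ball' (by simp [r]))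
  have harea := hfz.mul_lam_le_setIntegral_norm_sub (half_pos hr).le (half_lt_self hr)
  have hmean := (inv_mul_le_iff₀ (by positivity)).1
    (hInt z hz (r / 2) (half_pos hr) (by linarith))
  have hlam : Lam f z ≤ 3 * M * ω (2 * (1 / r)) := by
    rw [show 2 * (1 / r) = 1 / (r / 2) by field_simp]
    refine le_of_mul_le_mul_left ?_ (by positivity : 0 < π * (r / 2) ^ 3 / 3)
    linarith
  calc Lam f z ≤ 3 * M * ω (2 * (1 / r)) := hlam
    _ ≤ 3 * M * (2 * ω (1 / r)) := by gcongr; exact hω.le_two_mul (by positivity)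
    _ = 6 * M * ω (1 / r) := by ring
end

section
/- Let ω be a majorant, and let G be a proper subdomain of the plane such that each pair of points z, w ∈ G can be joined by a rectifiable curve γ ⊂ G with ∫_γ ω(d_G(ζ))/d_G(ζ) ds(ζ) ≤ C ω(|z−w|) for a fixed constant C = C(G,ω) > 0. Let f = h + ḡ be a harmonic mapping in G with h, g analytic in G. If f ∈ L_ω(G), then h ∈ L_ω(G) and g ∈ L_ω(G). -/
/-!
The Cauchy formula `h'(z) = (2πi)⁻¹ ∮ (ζ - z)⁻² (f(ζ) - f(z)) dζ` survives adding the
antiholomorphic part `conj g`, because on a circle `(ζ - z)⁻² dζ` is a multiple of the conjugate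
of `dζ`, so that part integrates to the conjugate of `∮ g = 0`. On the circle of radius `d_G(z)/2`
this gives `|h'(z)| ≤ 2K ω(d_G(z))/d_G(z)`, and integrating this bound along the curves of the
hypothesis gives `|h(z) - h(w)| ≤ 2KC ω(|z - w|)`. Since `conj f = g + conj h`, the same argument
applies to `g`.
-/

open MeasureTheory Metric Set Real
open scoped ComplexConjugate

theorem infDist_frontier_pos_of_mem {G : Set ℂ} (hG : IsOpen G) (hG' : G ≠ univ) {z : ℂ}
    (hz : z ∈ G) : 0 < infDist z (frontier G) := by
  rw [← isClosed_frontier.notMem_iff_infDist_pos (nonempty_frontier_iff.mpr ⟨⟨z, hz⟩, hG'⟩),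
    hG.frontier_eq]
  exact fun hz' => hz'.2 hz

theorem ball_infDist_frontier_subset {E : Type*} [NormedAddCommGroup E] [NormedSpace ℝ E]
    {G : Set E} (hG : IsOpen G) {z : E} (hz : z ∈ G) : ball z (infDist z (frontier G)) ⊆ G := by
  intro y hy
  have hball : ball z (infDist z (frontier G)) ⊆ G ∪ (closure G)ᶜ := fun x hx => by
    by_contra hx'
    simp only [mem_union, mem_compl_iff, not_or, not_not] at hx'
    exact disjoint_left.mp disjoint_ball_infDist hx ⟨hx'.2, hG.interior_eq.symm ▸ hx'.1⟩
  refine (convex_ball z _).isPreconnected.subset_left_of_subset_union hG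
    isClosed_closure.isOpen_compl ?_ hball ⟨z, mem_ball_self (pos_of_mem_ball hy), hz⟩ hy
  exact disjoint_compl_right.mono_right (compl_subset_compl.mpr subset_closure)

theorem ContDiffOn.intervalIntegrable_deriv {E : Type*} [NormedAddCommGroup E] [NormedSpace ℝ E]
    {f : ℝ → E} {a b : ℝ} (hf : ContDiffOn ℝ 1 f (Icc a b)) (hab : a ≤ b) :
    IntervalIntegrable (deriv f) volume a b := by
  rcases hab.eq_or_lt with rfl | hab
  · exact IntervalIntegrable.refl
  have hcont := (hf.continuousOn_derivWithin (uniqueDiffOn_Icc hab) le_rfl)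
  refine (hcont.intervalIntegrable_of_Icc hab.le).congr_ae ?_
  rw [uIoc_of_le hab.le, ← restrict_Ioo_eq_restrict_Ioc]
  filter_upwards [self_mem_ae_restrict measurableSet_Ioo] with t ht
  exact derivWithin_of_mem_nhds (Icc_mem_nhds ht.1 ht.2)

theorem norm_sub_le_integral_of_norm_deriv_le {E : Type*} [NormedAddCommGroup E]
    [NormedSpace ℂ E] [CompleteSpace E] {U : Set ℂ} (hU : IsOpen U) {H : ℂ → E}
    (hH : DifferentiableOn ℂ H U) {ρ : ℂ → ℝ} (hρ : ContinuousOn ρ U)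
    (hHρ : ∀ z ∈ U, ‖deriv H z‖ ≤ ρ z) {γ : ℝ → ℂ} {a b : ℝ} (hab : a ≤ b)
    (hγ : ContDiffOn ℝ 1 γ (Icc a b)) (hγU : MapsTo γ (Icc a b) U) :
    ‖H (γ b) - H (γ a)‖ ≤ ∫ t in a..b, ρ (γ t) * ‖deriv γ t‖ := by
  have hHγ : ContDiffOn ℝ 1 (H ∘ γ) (Icc a b) :=
    ((hH.contDiffOn hU).restrict_scalars ℝ).comp hγ hγU
  have hchain : ∀ t ∈ Ioo a b, deriv (H ∘ γ) t = deriv γ t • deriv H (γ t) := fun t ht => by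
    have hγt : DifferentiableAt ℝ γ t :=
      (hγ.differentiableOn one_ne_zero t (Ioo_subset_Icc_self ht)).differentiableAt
        (Icc_mem_nhds ht.1 ht.2)
    have hHt : DifferentiableAt ℂ H (γ t) :=
      hH.differentiableAt (hU.mem_nhds (hγU (Ioo_subset_Icc_self ht)))
    exact (hHt.hasDerivAt.scomp t hγt.hasDerivAt).deriv
  have hne : ∀ᵐ t ∂volume, t ≠ b := by simp [ae_iff]
  calc ‖H (γ b) - H (γ a)‖ = ‖∫ t in a..b, deriv (H ∘ γ) t‖ := by
        rw [intervalIntegral.integral_deriv_of_contDiffOn_Icc hHγ hab, Function.comp_apply,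
          Function.comp_apply]
    _ ≤ ∫ t in a..b, ρ (γ t) * ‖deriv γ t‖ := by
      refine intervalIntegral.norm_integral_le_of_norm_le hab ?_
        (((hγ.intervalIntegrable_deriv hab).norm).continuousOn_mul ?_)
      · filter_upwards [hne] with t htb ht
        have ht' : t ∈ Ioo a b := ⟨ht.1, lt_of_le_of_ne ht.2 htb⟩
        rw [hchain t ht', norm_smul, mul_comm]
        exact mul_le_mul_of_nonneg_right (hHρ _ (hγU (Ioo_subset_Icc_self ht'))) (norm_nonneg _)
      · rw [uIcc_of_le hab]
        exact hρ.comp hγ.continuousOn hγU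

theorem circleIntegral_one_div_sub_center_sq_mul_conj (c : ℂ) (r : ℝ) (g : ℂ → ℂ) :
    (∮ z in C(c, r), 1 / (z - c) ^ 2 * conj (g z)) =
      -((r : ℂ) ^ 2)⁻¹ * conj (∮ z in C(c, r), g z) := by
  rw [circleIntegral, circleIntegral, ← intervalIntegral.intervalIntegral_conj,
    ← intervalIntegral.integral_const_mul]
  congr 1
  funext θ
  rw [deriv_circleMap, circleMap_sub_center, smul_eq_mul, smul_eq_mul, map_mul, map_mul,
    Complex.conj_I]
  rcases eq_or_ne r 0 with rfl | hr
  · simp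
  set w := circleMap 0 r θ
  have hw0 : w ≠ 0 := by simp [w, circleMap_eq_center_iff, hr]
  have hw0' : conj w ≠ 0 := (map_ne_zero _).mpr hw0
  have hw : w * conj w = (r : ℂ) ^ 2 := by
    rw [Complex.mul_conj, Complex.normSq_eq_norm_sq, norm_circleMap_zero]
    norm_cast
    exact sq_abs r
  rw [← hw]
  field_simp

theorem circleIntegral_one_div_sub_center_sq_mul_add_conj {c : ℂ} {r : ℝ} (hr : 0 < r)
    {h g : ℂ → ℂ} (hh : DifferentiableOn ℂ h (closedBall c r))
    (hg : DifferentiableOn ℂ g (closedBall c r)) :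
    (∮ z in C(c, r), 1 / (z - c) ^ 2 * (h z + conj (g z))) = 2 * π * Complex.I * deriv h c := by
  have hker : ContinuousOn (fun z : ℂ => 1 / (z - c) ^ 2) (sphere c r) :=
    continuousOn_const.div (by fun_prop) fun z hz =>
      pow_ne_zero 2 (sub_ne_zero.mpr (ne_of_mem_sphere hz hr.ne'))
  have hgc : ContinuousOn g (sphere c r) := hg.continuousOn.mono sphere_subset_closedBall
  have hconj : (∮ z in C(c, r), 1 / (z - c) ^ 2 * conj (g z)) = 0 := by
    rw [circleIntegral_one_div_sub_center_sq_mul_conj,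
      (hg.mono closure_ball_subset_closedBall).diffContOnCl.circleIntegral_eq_zero hr.le]
    simp
  simp_rw [mul_add]
  rw [circleIntegral.integral_add, hconj, add_zero, ← smul_eq_mul (a := 2 * π * Complex.I),
    ← hh.deriv_eq_smul_circleIntegral hr]
  · rfl
  · exact (hker.mul (hh.continuousOn.mono sphere_subset_closedBall)).circleIntegrable hr.le
  · exact (hker.mul (Complex.continuous_conj.comp_continuousOn hgc)).circleIntegrable hr.le

theorem norm_deriv_le_of_eqOn_add_conj {c : ℂ} {r : ℝ} (hr : 0 < r) {h g f : ℂ → ℂ}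
    (hh : DifferentiableOn ℂ h (closedBall c r)) (hg : DifferentiableOn ℂ g (closedBall c r))
    (hf : EqOn f (fun z => h z + conj (g z)) (closedBall c r)) {M : ℝ}
    (hM : ∀ z ∈ sphere c r, ‖f z - f c‖ ≤ M) :
    ‖deriv h c‖ ≤ M / r := by
  have hh' : DifferentiableOn ℂ (fun z => h z - f c) (closedBall c r) := hh.sub_const _
  have hcauchy : deriv h c = (2 * π * Complex.I)⁻¹ •
      ∮ z in C(c, r), 1 / (z - c) ^ 2 * (f z - f c) := by
    rw [circleIntegral.integral_congr hr.le
        (g := fun z => 1 / (z - c) ^ 2 * ((h z - f c) + conj (g z))),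
      circleIntegral_one_div_sub_center_sq_mul_add_conj hr hh' hg, deriv_sub_const, smul_eq_mul,
      ← mul_assoc, inv_mul_cancel₀ Complex.two_pi_I_ne_zero, one_mul]
    intro z hz
    simp only [hf (sphere_subset_closedBall hz)]
    ring
  have hbound : ∀ z ∈ sphere c r, ‖1 / (z - c) ^ 2 * (f z - f c)‖ ≤ M / r ^ 2 := fun z hz => by
    rw [norm_mul, norm_div, norm_one, norm_pow, ← dist_eq_norm, mem_sphere.mp hz,
      one_div_mul_eq_div]
    gcongr
    exact hM z hz
  calc ‖deriv h c‖ ≤ r * (M / r ^ 2) := by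
        rw [hcauchy]
        exact circleIntegral.norm_two_pi_i_inv_smul_integral_le_of_norm_le_const hr.le hbound
    _ = M / r := by field_simp

theorem norm_deriv_le_of_eq_add_conj_of_majorant {ω : ℝ → ℝ} (hωm : MonotoneOn ω (Ici 0))
    {G : Set ℂ} (hG : IsOpen G) (hG' : G ≠ univ) {h g f : ℂ → ℂ}
    (hh : DifferentiableOn ℂ h G) (hg : DifferentiableOn ℂ g G)
    (hf : ∀ z ∈ G, f z = h z + conj (g z)) {K : ℝ} (hK : 0 ≤ K)
    (hfL : ∀ z ∈ G, ∀ w ∈ G, ‖f z - f w‖ ≤ K * ω (dist z w)) {z : ℂ} (hz : z ∈ G) :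
    ‖deriv h z‖ ≤ 2 * K * (ω (infDist z (frontier G)) / infDist z (frontier G)) := by
  set d := infDist z (frontier G)
  have hd : 0 < d := infDist_frontier_pos_of_mem hG hG' hz
  have hball : closedBall z (d / 2) ⊆ G :=
    (closedBall_subset_ball (by linarith)).trans (ball_infDist_frontier_subset hG hz)
  have hsphere : ∀ ζ ∈ sphere z (d / 2), ‖f ζ - f z‖ ≤ K * ω d := fun ζ hζ => by
    refine (hfL ζ (hball (sphere_subset_closedBall hζ)) z hz).trans ?_
    rw [mem_sphere.mp hζ]
    exact mul_le_mul_of_nonneg_left (hωm (mem_Ici.mpr (by positivity)) (mem_Ici.mpr hd.le)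
      (by linarith)) hK
  calc ‖deriv h z‖ ≤ K * ω d / (d / 2) :=
        norm_deriv_le_of_eqOn_add_conj (by positivity) (hh.mono hball) (hg.mono hball)
          (fun ζ hζ => hf ζ (hball hζ)) hsphere
    _ = 2 * K * (ω d / d) := by field_simp

theorem exists_norm_sub_le_mul_majorant_of_norm_deriv_le {ω : ℝ → ℝ}
    (hωc : ContinuousOn ω (Ici 0)) {G : Set ℂ} (hG : IsOpen G) (hG' : G ≠ univ) {C : ℝ}
    (hC : 0 < C)
    (hcurve : ∀ z ∈ G, ∀ w ∈ G, ∃ γ : ℝ → ℂ,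
      γ 0 = z ∧ γ 1 = w ∧ (∀ t ∈ Icc (0:ℝ) 1, γ t ∈ G) ∧
      ContDiffOn ℝ 1 γ (Icc (0:ℝ) 1) ∧
      (∫ t in (0:ℝ)..1,
          ω (infDist (γ t) (frontier G)) / infDist (γ t) (frontier G) * ‖deriv γ t‖)
        ≤ C * ω (dist z w))
    {H : ℂ → ℂ} (hH : DifferentiableOn ℂ H G) {M : ℝ} (hM : 0 < M)
    (hHM : ∀ z ∈ G, ‖deriv H z‖ ≤ M * (ω (infDist z (frontier G)) / infDist z (frontier G))) :
    ∃ K > (0 : ℝ), ∀ z ∈ G, ∀ w ∈ G, ‖H z - H w‖ ≤ K * ω (dist z w) := by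
  have hd : ContinuousOn (fun y => infDist y (frontier G)) G :=
    (continuous_infDist_pt _).continuousOn
  have hρ : ContinuousOn (fun y => M * (ω (infDist y (frontier G)) / infDist y (frontier G))) G :=
    continuousOn_const.mul ((hωc.comp hd fun _ _ => infDist_nonneg).div hd
      fun _ hy => (infDist_frontier_pos_of_mem hG hG' hy).ne')
  refine ⟨M * C, by positivity, fun z hz w hw => ?_⟩
  obtain ⟨γ, rfl, rfl, hγG, hγ, hγint⟩ := hcurve z hz w hw
  have key := norm_sub_le_integral_of_norm_deriv_le hG hH hρ hHM zero_le_one hγ hγG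
  simp_rw [mul_assoc] at key
  rw [intervalIntegral.integral_const_mul, norm_sub_rev] at key
  calc ‖H (γ 0) - H (γ 1)‖ ≤ M * (C * ω (dist (γ 0) (γ 1))) :=
        key.trans (mul_le_mul_of_nonneg_left hγint hM.le)
    _ = M * C * ω (dist (γ 0) (γ 1)) := by ring

theorem stmt8_general (ω : ℝ → ℝ) (hω : IsMajorant ω)
    (G : Set ℂ) (hGopen : IsOpen G) (hGproper : G ≠ univ)
    (C : ℝ) (hC : 0 < C)
    (hcurve : ∀ z ∈ G, ∀ w ∈ G, ∃ γ : ℝ → ℂ,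
      γ 0 = z ∧ γ 1 = w ∧ (∀ t ∈ Icc (0:ℝ) 1, γ t ∈ G) ∧
      ContDiffOn ℝ 1 γ (Icc (0:ℝ) 1) ∧
      (∫ t in (0:ℝ)..1,
          ω (infDist (γ t) (frontier G)) / infDist (γ t) (frontier G) * ‖deriv γ t‖)
        ≤ C * ω (dist z w))
    (h g f : ℂ → ℂ) (hh : DifferentiableOn ℂ h G) (hg : DifferentiableOn ℂ g G)
    (hfdec : ∀ z ∈ G, f z = h z + (starRingEnd ℂ) (g z))
    (hfLip : ∃ K > (0 : ℝ), ∀ z ∈ G, ∀ w ∈ G, ‖f z - f w‖ ≤ K * ω (dist z w)) :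
    (∃ K > (0 : ℝ), ∀ z ∈ G, ∀ w ∈ G, ‖h z - h w‖ ≤ K * ω (dist z w)) ∧
    (∃ K > (0 : ℝ), ∀ z ∈ G, ∀ w ∈ G, ‖g z - g w‖ ≤ K * ω (dist z w)) := by
  obtain ⟨hωc, hωm, -, -⟩ := hω
  obtain ⟨K, hK, hfL⟩ := hfLip
  have hfdec' : ∀ z ∈ G, conj (f z) = g z + conj (h z) := fun z hz => by
    rw [hfdec z hz, map_add, Complex.conj_conj, add_comm]
  have hfL' : ∀ z ∈ G, ∀ w ∈ G, ‖conj (f z) - conj (f w)‖ ≤ K * ω (dist z w) := fun z hz w hw => by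
    rw [← map_sub, Complex.norm_conj]
    exact hfL z hz w hw
  exact ⟨exists_norm_sub_le_mul_majorant_of_norm_deriv_le hωc hGopen hGproper hC hcurve hh
      (by positivity) fun z hz =>
        norm_deriv_le_of_eq_add_conj_of_majorant hωm hGopen hGproper hh hg hfdec hK.le hfL hz,
    exists_norm_sub_le_mul_majorant_of_norm_deriv_le hωc hGopen hGproper hC hcurve hg
      (by positivity) fun z hz =>
        norm_deriv_le_of_eq_add_conj_of_majorant hωm hGopen hGproper hg hh hfdec' hK.le hfL' hz⟩

/-- let `ω` be a majorant and `G` a proper subdomain of the plane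
such that any two points of `G` are joined by a rectifiable curve `γ ⊆ G` with
`∫_γ ω(d_G(ζ))/d_G(ζ) ds(ζ) ≤ C ω(|z-w|)`. If `f = h + ḡ` is harmonic in `G` with
`h, g` analytic in `G` and `f ∈ L_ω(G)`, then `h ∈ L_ω(G)` and `g ∈ L_ω(G)`. -/
theorem stmt8 (ω : ℝ → ℝ) (hω : IsMajorant ω)
    (G : Set ℂ) (hGopen : IsOpen G) (hGconn : IsConnected G) (hGproper : G ≠ univ)
    (C : ℝ) (hC : 0 < C)
    (hcurve : ∀ z ∈ G, ∀ w ∈ G, ∃ γ : ℝ → ℂ,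
      γ 0 = z ∧ γ 1 = w ∧ (∀ t ∈ Icc (0:ℝ) 1, γ t ∈ G) ∧
      ContDiffOn ℝ 1 γ (Icc (0:ℝ) 1) ∧
      (∫ t in (0:ℝ)..1,
          ω (infDist (γ t) (frontier G)) / infDist (γ t) (frontier G) * ‖deriv γ t‖)
        ≤ C * ω (dist z w))
    (h g f : ℂ → ℂ) (hh : DifferentiableOn ℂ h G) (hg : DifferentiableOn ℂ g G)
    (hfdec : ∀ z ∈ G, f z = h z + (starRingEnd ℂ) (g z))
    (hfLip : ∃ K > (0 : ℝ), ∀ z ∈ G, ∀ w ∈ G, ‖f z - f w‖ ≤ K * ω (dist z w)) :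
    (∃ K > (0 : ℝ), ∀ z ∈ G, ∀ w ∈ G, ‖h z - h w‖ ≤ K * ω (dist z w)) ∧
    (∃ K > (0 : ℝ), ∀ z ∈ G, ∀ w ∈ G, ‖g z - g w‖ ≤ K * ω (dist z w)) :=
  stmt8_general ω hω G hGopen hGproper C hC hcurve h g f hh hg hfdec hfLip
end

section
/- For a complex constant C, the harmonic mapping f(z) = C(z + z̄) on the unit disk D satisfies β_f = sup_{z ∈ D} (1−|z|²) Λ_f(z) = 2|C| and ‖f‖_{BMO_2} = |C|; in particular β_f = 2 ‖f‖_{BMO_2}, so the constant 2 in the inequality β_f ≤ 2‖f‖_{BMO_2} is sharp. -/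
/-!
`f(z) = C(z + z̄) = 2C·Re z` is real-linear, so `f_z = f_z̄ = C` and `Λ_f ≡ 2|C|`; the Bloch
supremum of `(1 - |z|²)·2|C|` is attained at `z = 0`. By odd symmetry the average of a linear
map over a disk is its value at the centre, so the oscillation of `f` over `D(z,r)` is that of
`f` over `D(0,r)`, and in polar coordinates `(πr²)⁻¹ ∫_{D(0,r)} 4|C|²(Re ζ)² = |C|²r²`. Hence
the `BMO₂` quantity of `D(z,r)` is `|C|·r`, whose supremum over `r ≤ 1 - |z|` is `|C|`.
-/

open Complex MeasureTheory Metric Set Real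
open scoped ENNReal

/-- The `BMO_p` norm of `f` on the unit disk (valued in `ℝ≥0∞` so that membership in
`BMO_p` is finiteness): the supremum over all disks `D(z,r) ⊆ 𝔻` with `r ∈ (0, 1-|z|]`
of `{(1/(πr²)) ∫_{D(z,r)} |f(ζ) - (1/(πr²)) ∫_{D(z,r)} f dA|^p dA(ζ)}^{1/p}`. -/
noncomputable def bmoNorm (f : ℂ → ℂ) (p : ℝ) : ℝ≥0∞ :=
  ⨆ (z : ℂ) (_ : ‖z‖ < 1) (r : ℝ) (_ : 0 < r) (_ : r ≤ 1 - ‖z‖),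
    ENNReal.ofReal
      (((π * r ^ 2)⁻¹ *
          ∫ ζ in ball z r,
            ‖f ζ - (π * r ^ 2)⁻¹ • ∫ ξ in ball z r, f ξ‖ ^ p) ^ (1 / p))

/-- The Bloch (Lipschitz) number `β_f = sup_{z ∈ 𝔻} (1-|z|²) Λ_f(z)`,
valued in `ℝ≥0∞`. -/
noncomputable def blochNorm (f : ℂ → ℂ) : ℝ≥0∞ :=
  ⨆ (z : ℂ) (_ : ‖z‖ < 1), ENNReal.ofReal ((1 - ‖z‖ ^ 2) * Lam f z)

section BallAverage

variable {V F : Type*} [NormedAddCommGroup V] [MeasurableSpace V] [BorelSpace V] (μ : Measure V)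
  [NormedAddCommGroup F] [NormedSpace ℝ F]

theorem setIntegral_ball_eq_setIntegral_ball_zero [μ.IsAddRightInvariant] (g : V → F) (z : V)
    (r : ℝ) : ∫ x in ball z r, g x ∂μ = ∫ x in ball 0 r, g (x + z) ∂μ := by
  rw [← (measurePreserving_add_right μ z).setIntegral_preimage_emb
    (measurableEmbedding_addRight z), preimage_add_right_ball, sub_self]

theorem setIntegral_ball_zero_eq_zero_of_odd [μ.IsNegInvariant] {g : V → F} (hg : g.Odd)
    (r : ℝ) : ∫ x in ball 0 r, g x ∂μ = 0 := by
  have h := (Measure.measurePreserving_neg μ).setIntegral_preimage_emb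
    measurableEmbedding_neg g (ball 0 r)
  simp only [neg_preimage, neg_ball, neg_zero, hg _, integral_neg] at h
  rw [neg_eq_iff_add_eq_zero, ← two_smul ℝ] at h
  exact (smul_eq_zero.mp h).resolve_left two_ne_zero

variable [NormedSpace ℝ V] [FiniteDimensional ℝ V] [μ.IsAddHaarMeasure] [CompleteSpace F]

theorem setAverage_ball_continuousLinearMap (L : V →L[ℝ] F) (z : V) {r : ℝ} (hr : 0 < r) :
    ⨍ x in ball z r, L x ∂μ = L z := by
  have hL : IntegrableOn L (ball 0 r) μ :=
    (L.continuous.continuousOn.integrableOn_compact (isCompact_closedBall 0 r)).mono_set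
      ball_subset_closedBall
  have hvol : μ.real (ball (0 : V) r) ≠ 0 :=
    (ENNReal.toReal_pos (measure_ball_pos μ 0 hr).ne' measure_ball_lt_top.ne).ne'
  rw [setAverage_eq, setIntegral_ball_eq_setIntegral_ball_zero]
  simp_rw [map_add]
  rw [integral_add hL (integrableOn_const measure_ball_lt_top.ne),
    setIntegral_ball_zero_eq_zero_of_odd μ (map_neg L), setIntegral_const,
    Measure.addHaar_real_ball_center, zero_add, smul_smul, inv_mul_cancel₀ hvol, one_smul]

theorem setIntegral_ball_norm_sub_setAverage_continuousLinearMap (L : V →L[ℝ] F) (z : V)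
    {r : ℝ} (hr : 0 < r) (p : ℝ) :
    ∫ x in ball z r, ‖L x - ⨍ y in ball z r, L y ∂μ‖ ^ p ∂μ = ∫ x in ball 0 r, ‖L x‖ ^ p ∂μ := by
  simp_rw [setAverage_ball_continuousLinearMap μ L z hr, ← map_sub]
  rw [setIntegral_ball_eq_setIntegral_ball_zero]
  simp_rw [add_sub_cancel_right]

end BallAverage

theorem Complex.measureReal_ball (z : ℂ) {r : ℝ} (hr : 0 ≤ r) :
    volume.real (ball z r) = π * r ^ 2 := by
  rw [measureReal_def, volume_ball, ENNReal.toReal_mul, ENNReal.toReal_pow, ENNReal.toReal_ofReal hr,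
    ENNReal.coe_toReal, NNReal.coe_real_pi, mul_comm]

theorem setIntegral_ball_zero_re_sq {r : ℝ} (hr : 0 < r) :
    ∫ ζ in ball (0 : ℂ) r, ζ.re ^ 2 = π * r ^ 4 / 4 := by
  have hpolar : ∀ p ∈ polarCoord.target,
      p.1 • (ball (0 : ℂ) r).indicator (fun ζ => ζ.re ^ 2) (Complex.polarCoord.symm p)
        = (Ioo 0 r).indicator (· ^ 3) p.1 * Real.cos p.2 ^ 2 := by
    rintro ⟨ρ, θ⟩ ⟨hρ, -⟩
    have hmem : Complex.polarCoord.symm (ρ, θ) ∈ ball (0 : ℂ) r ↔ ρ ∈ Ioo 0 r := by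
      simp [abs_of_pos (mem_Ioi.mp hρ), mem_Ioi.mp hρ]
    by_cases hρr : ρ ∈ Ioo 0 r
    · rw [indicator_of_mem (hmem.mpr hρr), indicator_of_mem hρr]
      rw [Complex.polarCoord_symm_apply, re_ofReal_mul, add_re, ofReal_re, mul_I_re, ofReal_im,
        neg_zero, add_zero, smul_eq_mul]
      ring
    · rw [indicator_of_notMem (mt hmem.mp hρr), indicator_of_notMem hρr]
      simp
  have hradial : ∫ ρ in Ioi (0 : ℝ), (Ioo 0 r).indicator (· ^ 3) ρ = r ^ 4 / 4 := by
    rw [setIntegral_indicator measurableSet_Ioo, inter_eq_self_of_subset_right Ioo_subset_Ioi_self,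
      ← integral_Ioc_eq_integral_Ioo, ← intervalIntegral.integral_of_le hr.le, integral_pow]
    norm_num
  have hangular : ∫ θ in Ioo (-π) π, Real.cos θ ^ 2 = π := by
    rw [← integral_Ioc_eq_integral_Ioo, ← intervalIntegral.integral_of_le (by linarith [pi_pos]),
      integral_cos_sq]
    simp
  rw [← integral_indicator measurableSet_ball, ← Complex.integral_comp_polarCoord_symm,
    setIntegral_congr_fun polarCoord.open_target.measurableSet hpolar, polarCoord_target,
    Measure.volume_eq_prod,
    setIntegral_prod_mul ((Ioo 0 r).indicator (· ^ 3)) (Real.cos · ^ 2), hradial, hangular]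
  ring

theorem blochNorm_eq_of_forall_lam_eq {f : ℂ → ℂ} {c : ℝ} (h : ∀ z, ‖z‖ < 1 → Lam f z = c) :
    blochNorm f = ENNReal.ofReal c := by
  have hc : 0 ≤ c := by
    rw [← h 0 (by simp), Lam]
    positivity
  refine le_antisymm (iSup₂_le fun z hz => ?_) (le_iSup₂_of_le (0 : ℂ) (by simp) ?_)
  · rw [h z hz]
    exact ENNReal.ofReal_le_ofReal (mul_le_of_le_one_left hc (by nlinarith [norm_nonneg z]))
  · simp [h 0 (by simp)]

theorem bmoNorm_eq_of_forall_eq_mul_radius {f : ℂ → ℂ} {p c : ℝ}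
    (h : ∀ z r, ‖z‖ < 1 → 0 < r → r ≤ 1 - ‖z‖ →
      ((π * r ^ 2)⁻¹ * ∫ ζ in ball z r, ‖f ζ - (π * r ^ 2)⁻¹ • ∫ ξ in ball z r, f ξ‖ ^ p)
        ^ (1 / p) = c * r) :
    bmoNorm f p = ENNReal.ofReal c := by
  refine le_antisymm (iSup₂_le fun z hz => iSup₂_le fun r hr => iSup_le fun hr' => ?_) ?_
  · rw [h z r hz hr hr', ENNReal.ofReal_le_ofReal_iff']
    have hr1 : r ≤ 1 := hr'.trans (by linarith [norm_nonneg z])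
    rcases le_total 0 c with hc | hc
    · exact .inl (mul_le_of_le_one_right hc hr1)
    · exact .inr (mul_nonpos_of_nonpos_of_nonneg hc hr.le)
  · refine le_iSup₂_of_le (0 : ℂ) (by simp) (le_iSup₂_of_le 1 one_pos (le_iSup_of_le (by simp) ?_))
    rw [h 0 1 (by simp) one_pos (by simp), mul_one]

noncomputable def mulAddConjCLM (C : ℂ) : ℂ →L[ℝ] ℂ :=
  C • (ContinuousLinearMap.id ℝ ℂ + conjCLE.toContinuousLinearMap)

section MulAddConj

variable (C : ℂ)

theorem mulAddConjCLM_apply (z : ℂ) : mulAddConjCLM C z = C * (z + (starRingEnd ℂ) z) := by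
  simp [mulAddConjCLM, mul_add]

theorem coe_mulAddConjCLM : ⇑(mulAddConjCLM C) = fun z => C * (z + (starRingEnd ℂ) z) :=
  funext (mulAddConjCLM_apply C)

theorem wirtingerZ_mulAddConjCLM (z : ℂ) : wirtingerZ (mulAddConjCLM C) z = C := by
  simp only [wirtingerZ, ContinuousLinearMap.fderiv, mulAddConjCLM_apply, map_one, conj_I]
  ring

theorem wirtingerZbar_mulAddConjCLM (z : ℂ) : wirtingerZbar (mulAddConjCLM C) z = C := by
  simp only [wirtingerZbar, ContinuousLinearMap.fderiv, mulAddConjCLM_apply, map_one, conj_I]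
  ring

theorem lam_mulAddConjCLM (z : ℂ) : Lam (mulAddConjCLM C) z = 2 * ‖C‖ := by
  rw [Lam, wirtingerZ_mulAddConjCLM, wirtingerZbar_mulAddConjCLM, two_mul]

theorem norm_mulAddConjCLM (z : ℂ) : ‖mulAddConjCLM C z‖ = 2 * ‖C‖ * |z.re| := by
  rw [mulAddConjCLM_apply, add_conj, norm_mul, norm_real, norm_mul, Real.norm_two, Real.norm_eq_abs]
  ring

theorem setIntegral_ball_zero_norm_mulAddConjCLM_sq {r : ℝ} (hr : 0 < r) :
    ∫ z in ball (0 : ℂ) r, ‖mulAddConjCLM C z‖ ^ (2 : ℝ) = ‖C‖ ^ 2 * π * r ^ 4 := by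
  simp_rw [rpow_two, norm_mulAddConjCLM, mul_pow, sq_abs]
  rw [integral_const_mul, setIntegral_ball_zero_re_sq hr]
  ring

theorem bmo_ball_mulAddConjCLM (z : ℂ) {r : ℝ} (hr : 0 < r) :
    ((π * r ^ 2)⁻¹ * ∫ ζ in ball z r,
        ‖mulAddConjCLM C ζ - (π * r ^ 2)⁻¹ • ∫ ξ in ball z r, mulAddConjCLM C ξ‖ ^ (2 : ℝ))
      ^ (1 / 2 : ℝ) = ‖C‖ * r := by
  rw [← Complex.measureReal_ball z hr.le, ← setAverage_eq,
    setIntegral_ball_norm_sub_setAverage_continuousLinearMap volume _ z hr,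
    setIntegral_ball_zero_norm_mulAddConjCLM_sq C hr, Complex.measureReal_ball z hr.le,
    ← sqrt_eq_rpow, show (π * r ^ 2)⁻¹ * (‖C‖ ^ 2 * π * r ^ 4) = (‖C‖ * r) ^ 2 by field_simp,
    sqrt_sq (by positivity)]

end MulAddConj

/-- for a complex constant `C`, the harmonic mapping
`f(z) = C(z + z̄)` on the unit disk satisfies `β_f = 2|C|` and `‖f‖_{BMO₂} = |C|`;
in particular `β_f = 2 ‖f‖_{BMO₂}`, so the constant `2` in `β_f ≤ 2‖f‖_{BMO₂}` is
sharp. -/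
theorem stmt12 (C : ℂ) :
    blochNorm (fun z => C * (z + (starRingEnd ℂ) z)) = ENNReal.ofReal (2 * ‖C‖) ∧
    bmoNorm (fun z => C * (z + (starRingEnd ℂ) z)) 2 = ENNReal.ofReal ‖C‖ ∧
    blochNorm (fun z => C * (z + (starRingEnd ℂ) z)) =
      2 * bmoNorm (fun z => C * (z + (starRingEnd ℂ) z)) 2 := by
  rw [← coe_mulAddConjCLM]
  have hbloch := blochNorm_eq_of_forall_lam_eq fun z _ => lam_mulAddConjCLM C z
  have hbmo : bmoNorm (mulAddConjCLM C) 2 = ENNReal.ofReal ‖C‖ :=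
    bmoNorm_eq_of_forall_eq_mul_radius fun z _ _ hr _ => bmo_ball_mulAddConjCLM C z hr
  refine ⟨hbloch, hbmo, ?_⟩
  rw [hbloch, hbmo, ← ENNReal.ofReal_ofNat 2, ← ENNReal.ofReal_mul zero_le_two]
end
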